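/- Let A be a real l×l matrix with spectral radius ρ(A) ≥ 1, W and P̄ symmetric positive semidefinite real l×l matrices, and f(X) = A X Aᵀ + W. Then for every ε > 0 there exists a constant c > 0 such that for all natural numbers τ, Tr(f^τ(P̄)) ≤ c · (ρ(A) + ε)^{2τ}. -/

import Mathlib

/-!
Unrolling the recursion gives `f^τ(P̄) = A^τ P̄ (A^τ)ᵀ + ∑_{k<τ} A^k W (A^k)ᵀ`, and for positive
semidefinite `X` one has `Tr(M X Mᵀ) ≤ ‖M‖_F² Tr X` (write `X = BᵀB` and use submultiplicativity of
the Frobenius norm). Gelfand's formula for the complexification of `A` gives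
`‖A^k‖_F ≤ C (ρ(A) + ε)^k`, and since `ρ(A) + ε > 1` the geometric sum over `k < τ` is of the
order of its last term.
-/

open Matrix

/-- The spectral radius of a real square matrix: the largest absolute value of its
complex eigenvalues. -/
noncomputable def specRad {l : ℕ} (A : Matrix (Fin l) (Fin l) ℝ) : ℝ :=
  sSup ((fun z : ℂ => ‖z‖) '' spectrum ℂ (A.map (algebraMap ℝ ℂ)))

open Filter Asymptotics

theorem exists_norm_pow_le_mul_pow {𝔸 : Type*} [NormedRing 𝔸] [NormedAlgebra ℂ 𝔸]
    [CompleteSpace 𝔸] (a : 𝔸) {r : ℝ} (hr : spectralRadius ℂ a < ENNReal.ofReal r) :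
    ∃ C, ∀ n : ℕ, ‖a ^ n‖ ≤ C * r ^ n := by
  have hr₀ : 0 < r := ENNReal.ofReal_pos.mp (pos_of_gt hr)
  have heventually : ∀ᶠ n : ℕ in atTop, ‖a ^ n‖ ≤ 1 * ‖r ^ n‖ := by
    filter_upwards [(spectrum.pow_norm_pow_one_div_tendsto_nhds_spectralRadius a).eventually_lt_const
      hr, eventually_gt_atTop 0] with n hn hn₀
    rw [ENNReal.ofReal_lt_ofReal_iff hr₀] at hn
    rw [one_mul, Real.norm_of_nonneg (by positivity)]
    have := pow_le_pow_left₀ (by positivity) hn.le n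
    rwa [← Real.rpow_natCast, ← Real.rpow_mul (norm_nonneg _), one_div_mul_cancel (by positivity),
      Real.rpow_one] at this
  obtain ⟨C, -, hbound⟩ := bound_of_isBigO_nat_atTop (IsBigO.of_bound 1 heventually)
  refine ⟨C, fun n => ?_⟩
  simpa [abs_of_pos hr₀] using hbound (pow_ne_zero n hr₀.ne')

theorem iterate_affine_conj_eq {R n : Type*} [CommRing R] [Fintype n] [DecidableEq n]
    (A W P : Matrix n n R) (τ : ℕ) :
    (fun Z : Matrix n n R => A * Z * Aᵀ + W)^[τ] P
      = A ^ τ * P * (A ^ τ)ᵀ + ∑ k ∈ Finset.range τ, A ^ k * W * (A ^ k)ᵀ := by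
  induction τ with
  | zero => simp
  | succ n ih =>
    rw [Function.iterate_succ_apply', ih, Finset.sum_range_succ', pow_succ', transpose_mul]
    simp only [Matrix.mul_add, Matrix.add_mul, Finset.mul_sum, Finset.sum_mul, pow_succ',
      transpose_mul, pow_zero, transpose_one, Matrix.one_mul, Matrix.mul_one, Matrix.mul_assoc]
    abel

theorem geom_sum_le_pow_div_sub_one {q : ℝ} (hq : 1 < q) (n : ℕ) :
    ∑ i ∈ Finset.range n, q ^ i ≤ q ^ n / (q - 1) := by
  rw [le_div_iff₀ (sub_pos.mpr hq), geom_sum_mul_of_one_le hq.le]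
  linarith

section Frobenius

open scoped Matrix.Norms.Frobenius

theorem spectralRadius_le_specRad {l : ℕ} (A : Matrix (Fin l) (Fin l) ℝ) :
    spectralRadius ℂ (A.map (algebraMap ℝ ℂ)) ≤ ENNReal.ofReal (specRad A) := by
  refine iSup₂_le fun z hz => ?_
  rw [← enorm_eq_nnnorm, ← ofReal_norm]
  exact ENNReal.ofReal_le_ofReal <| le_csSup
    ((spectrum.isCompact _).image continuous_norm).bddAbove ⟨z, hz, rfl⟩

theorem specRad_nonneg {l : ℕ} (A : Matrix (Fin l) (Fin l) ℝ) : 0 ≤ specRad A :=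
  Real.sSup_nonneg <| by rintro _ ⟨z, -, rfl⟩; exact norm_nonneg z

theorem exists_frobenius_norm_pow_le {l : ℕ} (A : Matrix (Fin l) (Fin l) ℝ) {s : ℝ}
    (hs : specRad A < s) : ∃ C, ∀ k : ℕ, ‖A ^ k‖ ≤ C * s ^ k := by
  obtain ⟨C, hbound⟩ := exists_norm_pow_le_mul_pow (A.map (algebraMap ℝ ℂ))
    ((spectralRadius_le_specRad A).trans_lt
      ((ENNReal.ofReal_lt_ofReal_iff_of_nonneg (specRad_nonneg A)).mpr hs))
  refine ⟨C, fun k => ?_⟩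
  rw [← frobenius_norm_map_eq (A ^ k) (algebraMap ℝ ℂ) (by simp), Matrix.map_pow]
  exact hbound k

theorem frobenius_norm_sq_eq_trace {m n : Type*} [Fintype m] [Fintype n] (M : Matrix m n ℝ) :
    ‖M‖ ^ 2 = (M * Mᵀ).trace := by
  rw [frobenius_norm_def, ← Real.sqrt_eq_rpow, Real.sq_sqrt (by positivity)]
  simp [trace, mul_apply, sq]

theorem trace_mul_mul_transpose_le {m n : Type*} [Fintype m] [Fintype n] [DecidableEq n]
    (M : Matrix m n ℝ) {X : Matrix n n ℝ} (hX : X.PosSemidef) :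
    (M * X * Mᵀ).trace ≤ ‖M‖ ^ 2 * X.trace := by
  open MatrixOrder in
  obtain ⟨B, rfl⟩ := CStarAlgebra.nonneg_iff_eq_star_mul_self.mp hX.nonneg
  have hconj : M * (star B * B) * Mᵀ = (M * Bᵀ) * (M * Bᵀ)ᵀ := by
    simp [Matrix.star_eq_conjTranspose, Matrix.mul_assoc]
  have htrace : (star B * B).trace = ‖Bᵀ‖ ^ 2 := by
    simp [frobenius_norm_sq_eq_trace, Matrix.star_eq_conjTranspose, trace_mul_comm B]
  rw [hconj, ← frobenius_norm_sq_eq_trace, htrace, ← mul_pow]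
  exact pow_le_pow_left₀ (norm_nonneg _) (frobenius_norm_mul M Bᵀ) 2

theorem trace_iterate_le {n : Type*} [Fintype n] [DecidableEq n] {A W P : Matrix n n ℝ}
    (hW : W.PosSemidef) (hP : P.PosSemidef) {C s : ℝ} (hs : 1 < s)
    (hA : ∀ k : ℕ, ‖A ^ k‖ ≤ C * s ^ k) (τ : ℕ) :
    ((fun Z : Matrix n n ℝ => A * Z * Aᵀ + W)^[τ] P).trace ≤
      C ^ 2 * (P.trace + W.trace / (s ^ 2 - 1)) * s ^ (2 * τ) := by
  have hq : 1 < s ^ 2 := one_lt_pow₀ hs two_ne_zero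
  have hconj : ∀ (k : ℕ) {X : Matrix n n ℝ}, X.PosSemidef →
      (A ^ k * X * (A ^ k)ᵀ).trace ≤ C ^ 2 * (s ^ 2) ^ k * X.trace := fun k X hX => by
    refine (trace_mul_mul_transpose_le _ hX).trans (mul_le_mul_of_nonneg_right ?_ hX.trace_nonneg)
    rw [← pow_mul, mul_comm 2, pow_mul, ← mul_pow]
    exact pow_le_pow_left₀ (norm_nonneg _) (hA k) 2
  rw [iterate_affine_conj_eq, trace_add, trace_sum, pow_mul]
  calc _ ≤ C ^ 2 * (s ^ 2) ^ τ * P.trace + ∑ k ∈ Finset.range τ, C ^ 2 * (s ^ 2) ^ k * W.trace :=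
        add_le_add (hconj τ hP) (Finset.sum_le_sum fun k _ => hconj k hW)
    _ = C ^ 2 * P.trace * (s ^ 2) ^ τ + C ^ 2 * W.trace * ∑ k ∈ Finset.range τ, (s ^ 2) ^ k := by
        rw [Finset.mul_sum]; ring_nf
    _ ≤ C ^ 2 * P.trace * (s ^ 2) ^ τ + C ^ 2 * W.trace * ((s ^ 2) ^ τ / (s ^ 2 - 1)) := by
        gcongr
        · exact mul_nonneg (sq_nonneg C) hW.trace_nonneg
        · exact geom_sum_le_pow_div_sub_one hq τ
    _ = C ^ 2 * (P.trace + W.trace / (s ^ 2 - 1)) * (s ^ 2) ^ τ := by ring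

end Frobenius

/-- Exponential upper bound on the estimation cost in terms of the age of
information: for every `ε > 0` there is `c > 0` with
`Tr(f^τ(P̄)) ≤ c (ρ(A) + ε)^{2τ}` for all `τ`. -/
theorem cost_exponential_upper_bound {l : ℕ}
    (A W Pbar : Matrix (Fin l) (Fin l) ℝ)
    (hW : W.PosSemidef) (hP : Pbar.PosSemidef) (hρ : 1 ≤ specRad A) :
    ∀ ε : ℝ, 0 < ε → ∃ c : ℝ, 0 < c ∧ ∀ τ : ℕ,
      ((fun Z : Matrix (Fin l) (Fin l) ℝ => A * Z * Aᵀ + W)^[τ] Pbar).trace ≤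
        c * (specRad A + ε) ^ (2 * τ) := by
  intro ε hε
  have hs : 1 < specRad A + ε := by linarith
  obtain ⟨C, hA⟩ := exists_frobenius_norm_pow_le A (lt_add_of_pos_right (specRad A) hε)
  set K := C ^ 2 * (Pbar.trace + W.trace / ((specRad A + ε) ^ 2 - 1))
  have hK : 0 ≤ K := mul_nonneg (sq_nonneg C) (add_nonneg hP.trace_nonneg
    (div_nonneg hW.trace_nonneg (sub_nonneg.mpr (one_le_pow₀ hs.le))))
  refine ⟨K + 1, by linarith, fun τ => (trace_iterate_le hW hP hs hA τ).trans ?_⟩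
  gcongr
  linarith
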